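/- Let φ_i : L → L' and ψ_i : L' → L'' be simplicial maps (i = 1,…,m) with ψ_i ∼ ψ_{i+1} for all i. Then SD(ψ₁∘φ₁,…,ψ_m∘φ_m) ≤ SD(φ₁,…,φ_m). -/

import Mathlib

noncomputable section

/-- An abstract simplicial complex on a vertex type `V`. -/
structure ASC (V : Type) where
  faces : Set (Finset V)
  nonempty_of_mem : ∀ ⦃σ⦄, σ ∈ faces → σ.Nonempty
  down_closed : ∀ ⦃σ⦄, σ ∈ faces → ∀ ⦃τ⦄, τ ⊆ σ → τ.Nonempty → τ ∈ faces

/-- A simplicial map between abstract simplicial complexes. -/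
structure SMap {V W : Type} [DecidableEq W] (K : ASC V) (L : ASC W) where
  toFun : V → W
  map_faces : ∀ ⦃σ⦄, σ ∈ K.faces → σ.image toFun ∈ L.faces

/-- The identity simplicial map. -/
def SMap.id {V : Type} [DecidableEq V] (K : ASC V) : SMap K K :=
  ⟨fun v => v, fun σ hσ => by simpa using hσ⟩

/-- Composition of simplicial maps. -/
def SMap.comp {U V W : Type} [DecidableEq V] [DecidableEq W]
    {K : ASC U} {L : ASC V} {M : ASC W}
    (g : SMap L M) (f : SMap K L) : SMap K M :=
  ⟨g.toFun ∘ f.toFun, fun σ hσ => by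
    rw [show σ.image (g.toFun ∘ f.toFun) = (σ.image f.toFun).image g.toFun by
      simp [Finset.image_image]]
    exact g.map_faces (f.map_faces hσ)⟩

/-- Two simplicial maps are contiguous if the union of the images of every
simplex is a simplex of the codomain. -/
def Contiguous {V W : Type} [DecidableEq W] {K : ASC V} {L : ASC W}
    (f g : SMap K L) : Prop :=
  ∀ ⦃σ⦄, σ ∈ K.faces → σ.image f.toFun ∪ σ.image g.toFun ∈ L.faces

/-- Two simplicial maps are in the same contiguity class if they are joined by
a finite chain of pairwise contiguous simplicial maps. -/
def ContigClass {V W : Type} [DecidableEq W] {K : ASC V} {L : ASC W}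
    (f g : SMap K L) : Prop :=
  Relation.ReflTransGen Contiguous f g

/-- `N` is a subcomplex of `K`. -/
def IsSubcomplex {V : Type} (N K : ASC V) : Prop :=
  N.faces ⊆ K.faces

/-- Restriction of a simplicial map to a subcomplex. -/
def SMap.restrict {V W : Type} [DecidableEq W] {N K : ASC V} {L : ASC W}
    (h : IsSubcomplex N K) (f : SMap K L) : SMap N L :=
  ⟨f.toFun, fun _ hσ => f.map_faces (h hσ)⟩

/-- `SDcover φ n` : the domain is covered by `n+1` subcomplexes on each of which
all restrictions of the maps `φ i` are pairwise in the same contiguity class. -/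
def SDcover {V W : Type} [DecidableEq W] {K : ASC V} {L : ASC W} {m : ℕ}
    (φ : Fin m → SMap K L) (n : ℕ) : Prop :=
  ∃ (Ls : Fin (n + 1) → ASC V) (h : ∀ k, IsSubcomplex (Ls k) K),
    (∀ σ ∈ K.faces, ∃ k, σ ∈ (Ls k).faces) ∧
    ∀ k i j, ContigClass (SMap.restrict (h k) (φ i)) (SMap.restrict (h k) (φ j))

/-- The higher contiguity distance `SD(φ₁, …, φ_m)` as a value in `ℕ∞`. -/
def SD {V W : Type} [DecidableEq W] {K : ASC V} {L : ASC W} {m : ℕ}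
    (φ : Fin m → SMap K L) : ℕ∞ :=
  sInf {N : ℕ∞ | ∃ n : ℕ, N = n ∧ SDcover φ n}

/-- The `n`-fold categorical power of a simplicial complex. -/
def ASC.pow {V : Type} [DecidableEq V] (K : ASC V) (n : ℕ) : ASC (Fin n → V) where
  faces := {σ | σ.Nonempty ∧ ∀ i, σ.image (fun v => v i) ∈ K.faces}
  nonempty_of_mem := fun _ hσ => hσ.1
  down_closed := fun σ hσ τ hτσ hτ =>
    ⟨hτ, fun i => K.down_closed (hσ.2 i)
      (Finset.image_subset_image (f := fun v => v i) hτσ) (hτ.image _)⟩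

/-- The `i`-th projection from the `n`-fold categorical power. -/
def ASC.proj {V : Type} [DecidableEq V] (K : ASC V) (n : ℕ) (i : Fin n) :
    SMap (K.pow n) K :=
  ⟨fun v => v i, fun _ hσ => hσ.2 i⟩

/-- The power of a simplicial map. -/
def SMap.pow {V W : Type} [DecidableEq V] [DecidableEq W] {K : ASC V} {L : ASC W}
    (f : SMap K L) (n : ℕ) : SMap (K.pow n) (L.pow n) :=
  ⟨fun v i => f.toFun (v i), fun σ hσ => by
    obtain ⟨h1, h2⟩ := hσ
    refine ⟨h1.image _, fun i => ?_⟩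
    have hf := f.map_faces (h2 i)
    rw [Finset.image_image] at hf ⊢
    exact hf⟩

/-- The higher discrete topological complexity `TC_n(K)`. -/
def TCn {V : Type} [DecidableEq V] (K : ASC V) (n : ℕ) : ℕ∞ :=
  SD (fun i : Fin n => K.proj n i)

/-- The higher discrete topological complexity of a simplicial map. -/
def TCnMap {V W : Type} [DecidableEq V] [DecidableEq W] {K : ASC V} {L : ASC W}
    (φ : SMap K L) (n : ℕ) : ℕ∞ :=
  SD (fun i : Fin n => φ.comp (K.proj n i))

/-- The binary categorical product of two simplicial complexes. -/
def ASC.prod {V W : Type} [DecidableEq V] [DecidableEq W]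
    (K : ASC V) (L : ASC W) : ASC (V × W) where
  faces := {σ | σ.Nonempty ∧ σ.image Prod.fst ∈ K.faces ∧ σ.image Prod.snd ∈ L.faces}
  nonempty_of_mem := fun _ hσ => hσ.1
  down_closed := fun σ hσ τ hτσ hτ =>
    ⟨hτ, K.down_closed hσ.2.1 (Finset.image_subset_image hτσ) (hτ.image _),
      L.down_closed hσ.2.2 (Finset.image_subset_image hτσ) (hτ.image _)⟩

/-- The path complex `I_m` : vertices `0, …, m`, maximal simplices `{i, i+1}`. -/
def pathComplex (m : ℕ) : ASC (Fin (m + 1)) where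
  faces := {σ | σ.Nonempty ∧ ∃ i : ℕ, ∀ j ∈ σ, (j : ℕ) = i ∨ (j : ℕ) = i + 1}
  nonempty_of_mem := fun _ hσ => hσ.1
  down_closed := fun _ hσ _ hτσ hτ =>
    ⟨hτ, hσ.2.imp fun _ h => fun j hj => h j (hτσ hj)⟩

/-- Two simplicial complexes have the same strong homotopy type. -/
def StrongHomotopyType {V W : Type} [DecidableEq V] [DecidableEq W]
    (K : ASC V) (L : ASC W) : Prop :=
  ∃ (f : SMap K L) (g : SMap L K),
    ContigClass (g.comp f) (SMap.id K) ∧ ContigClass (f.comp g) (SMap.id L)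

/-- The one-point simplicial complex. -/
def ptASC : ASC Unit where
  faces := {σ | σ.Nonempty}
  nonempty_of_mem := fun _ hσ => hσ
  down_closed := fun _ _ _ _ hτ => hτ

/-- A simplicial complex is strongly collapsible if it has the strong homotopy
type of a point. -/
def StronglyCollapsible {V : Type} [DecidableEq V] (K : ASC V) : Prop :=
  StrongHomotopyType K ptASC

/-- The inclusion `N → N × I_m` at level `0`. -/
def inclZero {V : Type} [DecidableEq V] (N : ASC V) (m : ℕ) :
    SMap N (N.prod (pathComplex m)) :=
  ⟨fun v => (v, 0), fun σ hσ => by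
    refine ⟨(N.nonempty_of_mem hσ).image _, ?_, ?_⟩
    · rw [Finset.image_image, show (Prod.fst ∘ fun v : V => (v, (0 : Fin (m + 1))))
        = fun v => v from rfl, Finset.image_id']
      exact hσ
    · rw [Finset.image_image]
      refine ⟨(N.nonempty_of_mem hσ).image _, 0, fun j hj => ?_⟩
      simp only [Finset.mem_image, Function.comp] at hj
      obtain ⟨v, -, rfl⟩ := hj
      simp⟩

/-- A simplicial finite-fibration : the homotopy lifting property with respect
to simplicial homotopies `N × I_m → L'` with `N` finite. -/
def IsFiniteFibration {V W : Type} [DecidableEq V] [DecidableEq W]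
    {K : ASC V} {L : ASC W} (φ : SMap K L) : Prop :=
  ∀ (U : Type) [Fintype U] [DecidableEq U] (N : ASC U) (m : ℕ) (g : SMap N K)
    (G : SMap (N.prod (pathComplex m)) L),
    (∀ v, G.toFun (v, 0) = φ.toFun (g.toFun v)) →
    ∃ Gt : SMap (N.prod (pathComplex m)) K,
      (∀ v, Gt.toFun (v, 0) = g.toFun v) ∧ (∀ x, φ.toFun (Gt.toFun x) = G.toFun x)

/-- The constant simplicial map at a vertex `v₀` of `L`. -/
def constMap {V W : Type} [DecidableEq W] (K : ASC V) {L : ASC W} {v₀ : W}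
    (hv₀ : {v₀} ∈ L.faces) : SMap K L :=
  ⟨fun _ => v₀, fun σ hσ => by
    have hsub : σ.image (fun _ => v₀) ⊆ {v₀} := by
      intro x hx
      simp only [Finset.mem_image] at hx
      obtain ⟨v, -, rfl⟩ := hx
      simp
    exact L.down_closed hv₀ hsub ((K.nonempty_of_mem hσ).image _)⟩

/-- A simplicial map is a strong equivalence if it admits an inverse up to
contiguity class. -/
def IsStrongEquiv {V W : Type} [DecidableEq V] [DecidableEq W]
    {K : ASC V} {L : ASC W} (f : SMap K L) : Prop :=
  ∃ g : SMap L K,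
    ContigClass (g.comp f) (SMap.id K) ∧ ContigClass (f.comp g) (SMap.id L)

/-! A cover `L₀, …, L_n` of `L` witnessing `SD(φ₁,…,φ_m) ≤ n` also witnesses
`SD(ψ₁∘φ₁,…,ψ_m∘φ_m) ≤ n`. Contiguity classes are compatible with composition on both sides,
and the chain condition puts all `ψ_i` in one class, so on each `L_k` the relations
`φ_i ∼ φ_j` and `ψ_i ∼ ψ_j` give `ψ_i∘φ_i ∼ ψ_j∘φ_j`. -/

theorem Fin.rel_of_forall_rel_succ {α : Type*} {r : α → α → Prop} (hr : Equivalence r)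
    {m : ℕ} {f : Fin m → α}
    (h : ∀ (i : ℕ) (hi : i + 1 < m), r (f ⟨i, Nat.lt_of_succ_lt hi⟩) (f ⟨i + 1, hi⟩))
    (i j : Fin m) : r (f i) (f j) := by
  cases m with
  | zero => exact i.elim0
  | succ n =>
    have : IsTrans α r := ⟨fun _ _ _ => hr.trans⟩
    have hlt : Relator.LiftFun (· < ·) r f f :=
      (Fin.liftFun_iff_succ r).2 fun k => h k (by simp)
    rcases lt_trichotomy i j with hij | rfl | hji
    · exact hlt hij
    · exact hr.refl _
    · exact hr.symm (hlt hji)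

section Contiguity

variable {U V W : Type} [DecidableEq V] [DecidableEq W] {K : ASC U} {L : ASC V} {M : ASC W}

theorem Contiguous.symm {f g : SMap K L} (h : Contiguous f g) : Contiguous g f :=
  fun _ hσ => by rw [Finset.union_comm]; exact h hσ

theorem ContigClass.equivalence : Equivalence (@ContigClass U V _ K L) :=
  ⟨fun _ => .refl, fun h => Relation.ReflTransGen.mono (fun _ _ => Contiguous.symm) _ _ h.swap,
    .trans⟩

theorem Contiguous.comp_left (ψ : SMap L M) {f g : SMap K L} (h : Contiguous f g) :
    Contiguous (ψ.comp f) (ψ.comp g) := fun σ hσ => by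
  simpa only [SMap.comp, ← Finset.image_image, ← Finset.image_union] using
    ψ.map_faces (h hσ)

theorem Contiguous.comp_right {ψ χ : SMap L M} (h : Contiguous ψ χ) (f : SMap K L) :
    Contiguous (ψ.comp f) (χ.comp f) := fun σ hσ => by
  simpa only [SMap.comp, ← Finset.image_image] using h (f.map_faces hσ)

theorem ContigClass.comp {ψ χ : SMap L M} {f g : SMap K L} (hψ : ContigClass ψ χ)
    (hf : ContigClass f g) : ContigClass (ψ.comp f) (χ.comp g) :=
  (Relation.ReflTransGen.lift (r := Contiguous) (ψ.comp ·)
      (fun _ _ => Contiguous.comp_left ψ) _ _ hf).trans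
    (Relation.ReflTransGen.lift (r := Contiguous) (·.comp g)
      (fun _ _ h => Contiguous.comp_right h g) _ _ hψ)

theorem SMap.restrict_comp {N : ASC U} (h : IsSubcomplex N K) (ψ : SMap L M) (f : SMap K L) :
    (ψ.comp f).restrict h = ψ.comp (f.restrict h) :=
  rfl

theorem SD_le_of_forall_SDcover {m m' : ℕ} {φ : Fin m → SMap K L} {χ : Fin m' → SMap K M}
    (h : ∀ n, SDcover φ n → SDcover χ n) : SD χ ≤ SD φ :=
  sInf_le_sInf fun _ ⟨n, hN, hφ⟩ => ⟨n, hN, h n hφ⟩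

theorem SDcover.comp {m n : ℕ} {φ : Fin m → SMap K L} {ψ : Fin m → SMap L M}
    (hψ : ∀ i j, ContigClass (ψ i) (ψ j)) (hφ : SDcover φ n) :
    SDcover (fun i => (ψ i).comp (φ i)) n := by
  obtain ⟨Ls, hsub, hcover, hcontig⟩ := hφ
  refine ⟨Ls, hsub, hcover, fun k i j => ?_⟩
  simpa only [SMap.restrict_comp] using (hψ i j).comp (hcontig k i j)

end Contiguity

/-- `SD(ψ₁∘φ₁,…,ψ_m∘φ_m) ≤ SD(φ₁,…,φ_m)` when the `ψ_i` form a
chain of maps in the same contiguity class. -/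
theorem SD_postcomp_le
    {U V W : Type} [DecidableEq V] [DecidableEq W]
    {L : ASC U} {L' : ASC V} {L'' : ASC W} {m : ℕ}
    (phi : Fin m → SMap L L') (psi : Fin m → SMap L' L'')
    (hchain : ∀ (i : ℕ) (h : i + 1 < m),
      ContigClass (psi ⟨i, Nat.lt_of_succ_lt h⟩) (psi ⟨i + 1, h⟩)) :
    SD (fun i => (psi i).comp (phi i)) ≤ SD phi :=
  SD_le_of_forall_SDcover fun _ hφ =>
    hφ.comp (Fin.rel_of_forall_rel_succ ContigClass.equivalence hchain)
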